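/- Every graph G of order at least two with at least m(|V(G)|-1)+1 edges contains a subgraph H on at least two vertices such that H - e is m-tree-connected for every edge e of H (i.e., H is m⁺-tree-connected). -/

import Mathlib

open SimpleGraph

def IsTreeConn {V : Type*} (m : ℕ) (G : SimpleGraph V) : Prop :=
  ∃ T : Fin m → SimpleGraph V, (∀ i, T i ≤ G) ∧ (∀ i, (T i).IsTree) ∧
    ∀ i j, i ≠ j → Disjoint (T i).edgeSet (T j).edgeSet

noncomputable def eIn {V : Type*} (G : SimpleGraph V) (S : Set V) : ℕ :=
  {e ∈ G.edgeSet | ∀ v ∈ e, v ∈ S}.ncard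

def IsSparse {V : Type*} (m : ℕ) (G : SimpleGraph V) : Prop :=
  ∀ S : Set V, S.Nonempty → (eIn G S : ℤ) ≤ m * S.ncard - m

def mComp {V : Type*} (m : ℕ) (G : SimpleGraph V) (v : V) : Set V :=
  ⋃₀ {X : Set V | v ∈ X ∧ IsTreeConn m (G.induce X)}

noncomputable def crossE {V : Type*} (m : ℕ) (G : SimpleGraph V) : ℕ :=
  {e ∈ G.edgeSet | ∃ u ∈ e, ∃ w ∈ e, mComp m G u ≠ mComp m G w}.ncard

noncomputable def Omega {V : Type*} (m : ℕ) (G : SimpleGraph V) : ℤ :=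
  m * (Set.range (mComp m G)).ncard - crossE m G

/-!
Take a vertex set `S` minimal among those spanning more than `m (|S| - 1)` edges (by the edge count
the whole vertex set is one, so `|S| ≥ 2`), and let `H` consist of exactly `m (|S| - 1) + 1` of
these edges. For each edge `e` of `H`, the graph `H - e` has `m (|S| - 1)` edges, while by the
minimality of `S` every vertex set `U` spans at most `m (|U| - 1)` of them. By Nash-Williams'
theorem, proved with augmenting paths in the exchange graph, `H - e` then splits into `m` forests,
and counting edges shows that each of them is a spanning tree.
-/

section Sparse

variable {V W : Type*} {G G' : SimpleGraph V} {m : ℕ}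

lemma eIn_univ (G : SimpleGraph V) : eIn G Set.univ = G.edgeSet.ncard := by
  simp [eIn]

lemma eIn_mono [Finite V] (h : G' ≤ G) (S : Set V) : eIn G' S ≤ eIn G S :=
  Set.ncard_le_ncard fun _ he => ⟨edgeSet_mono h he.1, he.2⟩

lemma eIn_eq_zero_of_subsingleton {S : Set V} (hS : S.Subsingleton) : eIn G S = 0 := by
  have : {e ∈ G.edgeSet | ∀ v ∈ e, v ∈ S} = ∅ := by
    refine Set.eq_empty_iff_forall_notMem.mpr ?_
    rintro ⟨u, v⟩ ⟨huv, hS'⟩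
    exact G.ne_of_adj huv (hS (hS' u (Sym2.mem_mk_left _ _)) (hS' v (Sym2.mem_mk_right _ _)))
  rw [eIn, this, Set.ncard_empty]

lemma eIn_le_eIn_image [Finite V] {Γ : SimpleGraph W} (f : Γ →g G) (hf : Function.Injective f)
    (U : Set W) : eIn Γ U ≤ eIn G (f '' U) := by
  refine Set.ncard_le_ncard_of_injOn (Sym2.map f) ?_ (Sym2.map.injective hf).injOn
  rintro e ⟨he, hU⟩
  refine ⟨f.map_mem_edgeSet he, fun v hv => ?_⟩
  obtain ⟨w, hw, rfl⟩ := Sym2.mem_map.mp hv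
  exact ⟨w, hU w hw, rfl⟩

lemma IsSparse.anti [Finite V] (h : G' ≤ G) (hG : IsSparse m G) : IsSparse m G' :=
  fun S hS => (Int.ofNat_le.mpr (eIn_mono h S)).trans (hG S hS)

lemma not_isSparse_of_le_ncard_edgeSet [Fintype V]
    (hE : m * (Fintype.card V - 1) + 1 ≤ G.edgeSet.ncard) : ¬ IsSparse m G := by
  intro hs
  obtain ⟨⟨u, -⟩, -⟩ := Set.nonempty_of_ncard_ne_zero (s := G.edgeSet) (by omega)
  have hsV := hs Set.univ ⟨u, trivial⟩
  rw [eIn_univ, Set.ncard_univ, Nat.card_eq_fintype_card] at hsV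
  have : m ≤ m * Fintype.card V := Nat.le_mul_of_pos_right m (Fintype.card_pos_iff.mpr ⟨u⟩)
  rw [Nat.mul_sub_one] at hE
  omega

lemma exists_minimal_of_not_isSparse [Finite V] (hG : ¬ IsSparse m G) :
    ∃ S : Set V, S.Nonempty ∧ (m * S.ncard - m : ℤ) < eIn G S ∧
      ∀ U ⊂ S, U.Nonempty → (eIn G U : ℤ) ≤ m * U.ncard - m := by
  simp only [IsSparse, not_forall, not_le] at hG
  obtain ⟨S, ⟨hS, hdense⟩, hmin⟩ := exists_minimal_of_wellFoundedLT
    (fun S : Set V => S.Nonempty ∧ (m * S.ncard - m : ℤ) < eIn G S) (by tauto)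
  refine ⟨S, hS, hdense, fun U hUS hU => ?_⟩
  by_contra! hUdense
  exact hUS.not_ge (hmin ⟨hU, hUdense⟩ hUS.le)

lemma two_le_ncard_of_lt_eIn [Finite V] {S : Set V} (hS : S.Nonempty)
    (hdense : (m * S.ncard - m : ℤ) < eIn G S) : 2 ≤ S.ncard := by
  by_contra! h
  have h1 : S.ncard = 1 := by
    have := (Set.ncard_pos (Set.toFinite S)).mpr hS
    omega
  rw [eIn_eq_zero_of_subsingleton (Set.ncard_le_one_iff_subsingleton.mp h1.le), h1] at hdense
  simp at hdense

end Sparse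

namespace SimpleGraph

variable {W : Type*} {G T : SimpleGraph W}

lemma Walk.reachable_of_forall_mem_edges {G' : SimpleGraph W} {x y : W} (p : G.Walk x y)
    (h : ∀ a b, s(a, b) ∈ p.edges → G'.Reachable a b) : G'.Reachable x y := by
  induction p with
  | nil => rfl
  | cons _ p ih =>
    exact (h _ _ (by simp)).trans (ih fun a b hab => h a b (by simp [hab]))

lemma IsAcyclic.not_reachable_deleteEdges {x y : W} {f : Sym2 W} (hG : G.IsAcyclic)
    {p : G.Walk x y} (hp : p.IsPath) (hf : f ∈ p.edges) :
    ¬ (G.deleteEdges {f}).Reachable x y := by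
  classical
  rintro ⟨q⟩
  let q' : G.Walk x y := q.mapLe (G.deleteEdges_le {f})
  have hpq : p = q'.toPath :=
    congrArg Subtype.val ((hG.subsingleton_path x y).elim ⟨p, hp⟩ q'.toPath)
  have hfq : f ∈ q.edges := by
    simpa [q', Walk.edges_mapLe_eq_edges] using Walk.edges_toPath_subset_edges q' (hpq ▸ hf)
  simpa using q.edges_subset_edgeSet hfq

lemma IsTree.ncard_edgeSet_add_one [Finite W] (hT : T.IsTree) :
    T.edgeSet.ncard + 1 = Nat.card W := by
  simpa [Nat.card_coe_set_eq] using (isTree_iff_connected_and_card.mp hT).2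

lemma IsAcyclic.exists_le_isTree [Nonempty W] (hT : T.IsAcyclic) :
    ∃ T', T ≤ T' ∧ T'.IsTree := by
  obtain ⟨T', hle, -, hT'⟩ := connected_top.exists_isTree_le_of_le_of_isAcyclic le_top hT
  exact ⟨T', hle, hT'⟩

lemma IsAcyclic.ncard_edgeSet_add_one_le [Finite W] [Nonempty W] (hT : T.IsAcyclic) :
    T.edgeSet.ncard + 1 ≤ Nat.card W := by
  obtain ⟨T', hle, hT'⟩ := hT.exists_le_isTree
  rw [← hT'.ncard_edgeSet_add_one]
  exact Nat.add_le_add_right (Set.ncard_le_ncard (edgeSet_mono hle)) 1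

lemma IsAcyclic.isTree_of_ncard_edgeSet [Finite W] [Nonempty W] (hT : T.IsAcyclic)
    (hcard : T.edgeSet.ncard + 1 = Nat.card W) : T.IsTree := by
  obtain ⟨T', hle, hT'⟩ := hT.exists_le_isTree
  have : T.edgeSet = T'.edgeSet := Set.eq_of_subset_of_ncard_le (edgeSet_mono hle)
    (by have := hT'.ncard_edgeSet_add_one; omega)
  rwa [edgeSet_inj.mp this]

lemma IsAcyclic.ncard_edgeSet_add_one_eq [Finite W] (hT : T.IsAcyclic) {U : Set W} {u : W}
    (hu : u ∈ U) (hsupp : T.support ⊆ U) (hconn : ∀ v ∈ U, T.Reachable u v) :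
    T.edgeSet.ncard + 1 = U.ncard := by
  set C := T.connectedComponentMk u
  have hC : C.supp = U := by
    ext v
    rw [ConnectedComponent.mem_supp_iff, ConnectedComponent.eq]
    refine ⟨fun h => ?_, fun hv => (hconn v hv).symm⟩
    by_cases hvu : v = u
    · exact hvu ▸ hu
    · exact hsupp (mem_support_of_reachable hvu h)
  have hspan : C.toSimpleGraph.spanningCoe = T :=
    (spanningCoe_induce_eq_self _ _).mpr (show T.support ⊆ C.supp from hC ▸ hsupp)
  have htree := (hT.isTree_connectedComponent C).ncard_edgeSet_add_one
  rw [← hspan, edgeSet_map,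
    Set.ncard_image_of_injective _ (Function.Embedding.subtype _).sym2Map.injective]
  exact htree.trans (by rw [← hC, ← Nat.card_coe_set_eq]; rfl)

section Labeling

variable {K : Type*} {H : SimpleGraph W} {c : Sym2 W → K}

def labelClass (G : SimpleGraph W) (c : Sym2 W → K) (k : K) : SimpleGraph W :=
  G.deleteEdges {e | c e ≠ k}

@[simp]
lemma mem_edgeSet_labelClass {k : K} {e : Sym2 W} :
    e ∈ (G.labelClass c k).edgeSet ↔ e ∈ G.edgeSet ∧ c e = k := by
  simp [labelClass, edgeSet_deleteEdges]

lemma labelClass_adj {k : K} {x y : W} :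
    (G.labelClass c k).Adj x y ↔ G.Adj x y ∧ c s(x, y) = k := by
  simp [labelClass]

lemma labelClass_le (G : SimpleGraph W) (c : Sym2 W → K) (k : K) : G.labelClass c k ≤ G :=
  G.deleteEdges_le _

lemma labelClass_mono (hGH : G ≤ H) (c : Sym2 W → K) (k : K) :
    G.labelClass c k ≤ H.labelClass c k :=
  fun _ _ hab => labelClass_adj.mpr ⟨hGH (labelClass_adj.mp hab).1, (labelClass_adj.mp hab).2⟩

lemma ncard_edgeSet_eq_sum_labelClass [Finite W] [Fintype K] (G : SimpleGraph W)
    (c : Sym2 W → K) : G.edgeSet.ncard = ∑ k, (G.labelClass c k).edgeSet.ncard := by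
  have hunion : G.edgeSet = ⋃ k, (G.labelClass c k).edgeSet := by ext; simp
  rw [hunion, Set.ncard_iUnion_of_finite (fun _ => Set.toFinite _), finsum_eq_sum_of_fintype]
  intro k l hkl
  simp only [Function.onFun, Set.disjoint_left, mem_edgeSet_labelClass]
  exact fun _ hk hl => hkl (hk.2.symm.trans hl.2)

def IsForestLabeling (G : SimpleGraph W) (c : Sym2 W → K) : Prop :=
  ∀ k, (G.labelClass c k).IsAcyclic

section update

variable [DecidableEq W] {x y : W} {i : K}

lemma labelClass_update_self_le (hGH : G.deleteEdges {s(x, y)} ≤ H) :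
    G.labelClass (Function.update c s(x, y) i) i ≤ H.labelClass c i ⊔ edge x y := by
  intro a b hab
  rw [labelClass_adj] at hab
  by_cases he : s(a, b) = s(x, y)
  · exact Or.inr ((edge_adj ..).mpr ⟨Sym2.eq_iff.mp he, hab.1.ne⟩)
  · refine Or.inl (labelClass_adj.mpr ⟨hGH ((deleteEdges_adj ..).mpr ⟨hab.1, he⟩), ?_⟩)
    simpa [Function.update_of_ne he] using hab.2

lemma labelClass_update_le_of_ne (hGH : G.deleteEdges {s(x, y)} ≤ H) {k : K} (hk : k ≠ i) :
    G.labelClass (Function.update c s(x, y) i) k ≤ (H.labelClass c k).deleteEdges {s(x, y)} := by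
  intro a b hab
  rw [labelClass_adj] at hab
  have he : s(a, b) ≠ s(x, y) := fun he => hk (by simpa [he] using hab.2.symm)
  refine (deleteEdges_adj ..).mpr ⟨labelClass_adj.mpr ⟨?_, ?_⟩, he⟩
  · exact hGH ((deleteEdges_adj ..).mpr ⟨hab.1, he⟩)
  · simpa [Function.update_of_ne he] using hab.2

lemma IsForestLabeling.update (hc : H.IsForestLabeling c) (hGH : G.deleteEdges {s(x, y)} ≤ H)
    (hxy : ¬ (H.labelClass c i).Reachable x y) :
    G.IsForestLabeling (Function.update c s(x, y) i) := by
  intro k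
  obtain rfl | hk := eq_or_ne k i
  · exact ((hc k).sup_edge_of_not_reachable hxy).anti (labelClass_update_self_le hGH)
  · exact (hc k).anti ((labelClass_update_le_of_ne hGH hk).trans (deleteEdges_le _))

end update

/-- `e → f` is an arc of the exchange graph: `e` can enter the class of `f` once `f` leaves it. -/
def ExchangeStep (H : SimpleGraph W) (c : Sym2 W → K) (e f : Sym2 W) : Prop :=
  ∃ k x y, e = s(x, y) ∧ ∃ p : (H.labelClass c k).Walk x y, p.IsPath ∧ f ∈ p.edges

def ExchangeReach (H : SimpleGraph W) (c : Sym2 W → K) (e₀ : Sym2 W) : ℕ → Sym2 W → Prop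
  | 0, e => e = e₀
  | n + 1, f => ∃ e, ExchangeReach H c e₀ n e ∧ ExchangeStep H c e f

variable {e₀ : Sym2 W}

/-- An exchange path none of whose label-class paths runs through `e` is unaffected by
relabelling `e`. -/
lemma ExchangeReach.update [DecidableEq W] {e : Sym2 W} (i : K) :
    ∀ {n a}, ExchangeReach H c e₀ n a →
      (∃ s < n, ∃ b, ExchangeReach H c e₀ s b ∧ ExchangeStep H c b e) ∨
        ExchangeReach H (Function.update c e i) e₀ n a
  | 0, _, h => Or.inr h
  | n + 1, f, ⟨a, ha, k, x, y, hxy, p, hp, hf⟩ => by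
    rcases ExchangeReach.update i ha with ⟨s, hs, b, hb, hbe⟩ | ha'
    · exact Or.inl ⟨s, by omega, b, hb, hbe⟩
    by_cases he : e ∈ p.edges
    · exact Or.inl ⟨n, by omega, a, ha, k, x, y, hxy, p, hp, he⟩
    have hp' : ∀ g ∈ p.edges, g ∈ (H.labelClass (Function.update c e i) k).edgeSet := by
      intro g hg
      have hne : g ≠ e := fun h => he (h ▸ hg)
      simpa [Function.update_of_ne hne] using p.edges_subset_edgeSet hg
    exact Or.inr ⟨a, ha', k, x, y, hxy, p.transfer _ hp', hp.transfer _, by simpa using hf⟩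

/-- Move the last edge `xy` of a shortest exchange path into class `i`; its predecessor then fits
into the class that `xy` has left, and the shortened path survives the relabelling. -/
theorem exists_isForestLabeling_of_exchangeReach (hGH : G.deleteEdges {e₀} ≤ H) {n : ℕ} :
    ∀ {c : Sym2 W → K} {x y : W} {i : K}, H.IsForestLabeling c →
      ExchangeReach H c e₀ n s(x, y) → ¬ (H.labelClass c i).Reachable x y →
        ∃ c' : Sym2 W → K, G.IsForestLabeling c' := by
  classical
  induction n using Nat.strong_induction_on with
  | _ n ih =>
    intro c x y i hc hn hxy
    cases n with
    | zero =>
      obtain rfl : s(x, y) = e₀ := hn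
      exact ⟨_, hc.update hGH hxy⟩
    | succ n =>
      obtain ⟨_, he', k, x', y', rfl, p, hp, hxyp⟩ := hn
      have hik : k ≠ i := by
        rintro rfl
        exact hxy (p.adj_of_mem_edges hxyp).reachable
      rcases ExchangeReach.update (e := s(x, y)) i he' with ⟨s, hs, b, hb, hbe⟩ | he''
      · exact ih (s + 1) (by omega) hc ⟨b, hb, hbe⟩ hxy
      · refine ih n (by omega) (i := k) (hc.update (deleteEdges_le _) hxy) he'' fun h => ?_
        exact (hc k).not_reachable_deleteEdges hp hxyp
          (h.mono (labelClass_update_le_of_ne (deleteEdges_le _) hik))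

lemma reachable_of_exchangeReach {u v : W} {T : SimpleGraph W}
    (hT : ∀ n x y, ExchangeReach H c s(u, v) n s(x, y) → T.Reachable x y) :
    ∀ {n e}, ExchangeReach H c s(u, v) n e → ∀ z ∈ e, T.Reachable u z
  | 0, _, rfl, z, hz => by
    rcases Sym2.mem_iff.mp hz with rfl | rfl
    · rfl
    · exact hT 0 u z rfl
  | n + 1, e, ⟨_, he', k, x', y', hxy, p, hp, hep⟩, z, hz => by
    classical
    subst hxy
    obtain ⟨w, rfl⟩ := Sym2.mem_iff_exists.mp hz
    have hzp : z ∈ p.support := p.fst_mem_support_of_mem_edges hep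
    refine (reachable_of_exchangeReach hT he' x' (Sym2.mem_mk_left _ _)).trans
      ((p.takeUntil z hzp).reachable_of_forall_mem_edges fun a b hab => hT (n + 1) a b ?_)
    exact ⟨_, he', k, x', y', rfl, p, hp, p.edges_takeUntil_subset_edges hzp hab⟩

/-- If no exchange path leads from `uv` to an edge that fits into some class, the edges `R` reached
from `uv` span a vertex set `U` on which every class restricted to `R` is a spanning tree; with
`uv` added, `R` has too many edges for `U`. -/
theorem not_isSparse_of_forall_reachable [Finite W] [Fintype K] (hc : H.IsForestLabeling c)
    (hHG : H ≤ G) {u v : W} (huv : G.Adj u v) (hH : ¬ H.Adj u v)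
    (hblocked : ∀ n x y, ExchangeReach H c s(u, v) n s(x, y) →
      ∀ k, (H.labelClass c k).Reachable x y) :
    ¬ IsSparse (Fintype.card K) G := by
  set R : Set (Sym2 W) := {e | ∃ n, ExchangeReach H c s(u, v) n e}
  set U : Set W := {z | ∃ e ∈ R, z ∈ e}
  set HR := H.deleteEdges Rᶜ
  have hHR : ∀ {e}, e ∈ HR.edgeSet ↔ e ∈ H.edgeSet ∧ e ∈ R := by
    simp [HR, edgeSet_deleteEdges]
  have hreach : ∀ n x y, ExchangeReach H c s(u, v) n s(x, y) →
      ∀ k, (HR.labelClass c k).Reachable x y := by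
    intro n x y hn k
    obtain ⟨p, hp⟩ := (hblocked n x y hn k).exists_isPath
    refine ⟨p.transfer _ fun f hf => ?_⟩
    have hfR : f ∈ R := ⟨n + 1, _, hn, k, x, y, rfl, p, hp, hf⟩
    have := p.edges_subset_edgeSet hf
    rw [mem_edgeSet_labelClass] at this ⊢
    exact ⟨hHR.mpr ⟨this.1, hfR⟩, this.2⟩
  have hu : u ∈ U := ⟨s(u, v), ⟨0, rfl⟩, Sym2.mem_mk_left _ _⟩
  have hclass : ∀ k, (HR.labelClass c k).edgeSet.ncard + 1 = U.ncard := by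
    intro k
    refine ((hc k).anti (labelClass_mono (deleteEdges_le _) c k)).ncard_edgeSet_add_one_eq hu
      ?_ ?_
    · rintro z ⟨w, hzw⟩
      exact ⟨s(z, w), (hHR.mp (labelClass_adj.mp hzw).1).2, Sym2.mem_mk_left _ _⟩
    · rintro z ⟨e, ⟨n, hn⟩, hz⟩
      exact reachable_of_exchangeReach (fun n x y h => hreach n x y h k) hn z hz
  have hcount : HR.edgeSet.ncard = Fintype.card K * (U.ncard - 1) := by
    simp [ncard_edgeSet_eq_sum_labelClass HR c, show ∀ k, (HR.labelClass c k).edgeSet.ncard =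
      U.ncard - 1 from fun k => by have := hclass k; omega]
  have hdense : HR.edgeSet.ncard + 1 ≤ eIn G U := by
    have huvHR : s(u, v) ∉ HR.edgeSet := fun h => hH (hHR.mp h).1
    rw [← Set.ncard_insert_of_notMem huvHR]
    refine Set.ncard_le_ncard ?_
    rintro e (rfl | he)
    · exact ⟨huv, fun z hz => ⟨s(u, v), ⟨0, rfl⟩, hz⟩⟩
    · exact ⟨edgeSet_mono hHG (hHR.mp he).1, fun z hz => ⟨e, (hHR.mp he).2, hz⟩⟩
  intro hs
  have hsU := hs U ⟨u, hu⟩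
  obtain ⟨t, ht⟩ : ∃ t, U.ncard = t + 1 :=
    ⟨U.ncard - 1, by have := (Set.ncard_pos (Set.toFinite U)).mpr ⟨u, hu⟩; omega⟩
  rw [hcount, ht, Nat.add_sub_cancel] at hdense
  rw [ht] at hsU
  push_cast at hsU
  linarith [(by exact_mod_cast hdense : ((Fintype.card K * t + 1 : ℕ) : ℤ) ≤ eIn G U)]

/-- Nash-Williams' forest decomposition theorem. -/
theorem exists_isForestLabeling_of_isSparse [Finite W] [Fintype K] [Nonempty K]
    (hs : IsSparse (Fintype.card K) G) : ∃ c : Sym2 W → K, G.IsForestLabeling c := by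
  classical
  induction hn : G.edgeSet.ncard generalizing G with
  | zero =>
    have hG : G = ⊥ := edgeSet_eq_empty.mp ((Set.ncard_eq_zero (Set.toFinite _)).mp hn)
    exact ⟨fun _ => Classical.arbitrary K,
      fun k => isAcyclic_bot.anti (hG ▸ labelClass_le G _ k)⟩
  | succ n ih =>
    obtain ⟨⟨u, v⟩, huv⟩ := Set.nonempty_of_ncard_ne_zero (s := G.edgeSet) (by omega)
    obtain ⟨c, hc⟩ := ih (hs.anti (deleteEdges_le {s(u, v)}))
      (by rw [edgeSet_deleteEdges, Set.ncard_sdiff_singleton_of_mem huv]; omega)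
    by_contra! hno
    refine not_isSparse_of_forall_reachable hc (deleteEdges_le _) huv (by simp) ?_ hs
    intro n x y hn k
    by_contra hxy
    obtain ⟨c', hc'⟩ := exists_isForestLabeling_of_exchangeReach le_rfl hc hn hxy
    exact hno c' hc'

end Labeling

end SimpleGraph

lemma IsTreeConn.mono {W : Type*} {m : ℕ} {G G' : SimpleGraph W} (hG' : IsTreeConn m G')
    (h : G' ≤ G) : IsTreeConn m G := by
  obtain ⟨T, hT, htree, hdisj⟩ := hG'
  exact ⟨T, fun i => (hT i).trans h, htree, hdisj⟩

lemma isTreeConn_of_isSparse {W : Type*} [Finite W] [Nonempty W] {G : SimpleGraph W} {m : ℕ}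
    (hm : 0 < m) (hs : IsSparse m G) (hcard : G.edgeSet.ncard + m = m * Nat.card W) :
    IsTreeConn m G := by
  have : Nonempty (Fin m) := ⟨⟨0, hm⟩⟩
  obtain ⟨c, hc⟩ := exists_isForestLabeling_of_isSparse (K := Fin m) (by simpa using hs)
  have hN : 0 < Nat.card W := Nat.card_pos
  have hle : ∀ k ∈ Finset.univ, (G.labelClass c k).edgeSet.ncard ≤ Nat.card W - 1 :=
    fun k _ => by have := (hc k).ncard_edgeSet_add_one_le; omega
  have hsum : ∑ k, (G.labelClass c k).edgeSet.ncard = ∑ _k : Fin m, (Nat.card W - 1) := by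
    rw [← ncard_edgeSet_eq_sum_labelClass, Finset.sum_const, Finset.card_univ, Fintype.card_fin,
      smul_eq_mul, Nat.mul_sub, mul_one]
    omega
  have heq := (Finset.sum_eq_sum_iff_of_le hle).mp hsum
  refine ⟨G.labelClass c, fun k => labelClass_le G c k,
    fun k => (hc k).isTree_of_ncard_edgeSet (by rw [heq k (Finset.mem_univ k)]; omega), ?_⟩
  intro i j hij
  refine Set.disjoint_left.mpr fun e hi hj => hij ?_
  exact (mem_edgeSet_labelClass.mp hi).2.symm.trans (mem_edgeSet_labelClass.mp hj).2

namespace SimpleGraph.Subgraph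

variable {V : Type*} {G : SimpleGraph V} {m : ℕ}

lemma ncard_edgeSet_coe (H : G.Subgraph) : H.coe.edgeSet.ncard = H.edgeSet.ncard := by
  rw [← H.image_coe_edgeSet_coe, Set.ncard_image_of_injective _
    (Sym2.map.injective Subtype.val_injective)]

lemma edgeSet_deleteEdges (H : G.Subgraph) (s : Set (Sym2 V)) :
    (H.deleteEdges s).edgeSet = H.edgeSet \ s := by
  ext e
  induction e using Sym2.ind
  simp

lemma exists_verts_eq_ncard_edgeSet_eq [Finite V] (S : Set V) {N : ℕ} (hN : N ≤ eIn G S) :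
    ∃ H : G.Subgraph, H.verts = S ∧ H.edgeSet.ncard = N := by
  set H₀ := (⊤ : G.Subgraph).induce S
  have hH₀ : H₀.edgeSet = {e ∈ G.edgeSet | ∀ v ∈ e, v ∈ S} := by
    ext e
    induction e using Sym2.ind
    simp only [H₀, Subgraph.mem_edgeSet, induce_adj, top_adj, Set.mem_ofPred_eq,
      SimpleGraph.mem_edgeSet, Sym2.mem_iff, forall_eq_or_imp, forall_eq]
    tauto
  obtain ⟨D, hD, hDcard⟩ := Set.exists_subset_card_eq (s := H₀.edgeSet) (n := eIn G S - N)
    (by rw [hH₀, ← eIn]; omega)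
  refine ⟨H₀.deleteEdges D, rfl, ?_⟩
  rw [edgeSet_deleteEdges, Set.ncard_sdiff hD, hDcard, hH₀, ← eIn]
  omega

lemma isSparse_coe [Finite V] (H : G.Subgraph)
    (hmin : ∀ U ⊂ H.verts, U.Nonempty → (eIn G U : ℤ) ≤ m * U.ncard - m)
    (hcard : (H.edgeSet.ncard : ℤ) ≤ m * H.verts.ncard - m) : IsSparse m H.coe := by
  intro U hU
  by_cases hUu : U = Set.univ
  · subst hUu
    rwa [eIn_univ, ncard_edgeSet_coe, Set.ncard_univ, Nat.card_coe_set_eq]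
  have hUH : Subtype.val '' U ⊂ H.verts := by
    refine ⟨Subtype.coe_image_subset _ _, fun h => hUu (Set.eq_univ_of_forall fun x => ?_)⟩
    obtain ⟨y, hy, hxy⟩ := h x.2
    exact Subtype.val_injective hxy ▸ hy
  have := hmin _ hUH (hU.image _)
  rw [Set.ncard_image_of_injective _ Subtype.val_injective] at this
  exact (Int.ofNat_le.mpr (eIn_le_eIn_image H.hom H.hom_injective U)).trans this

lemma isTreeConn_coe_deleteEdges [Finite V] (hm : 0 < m) (H : G.Subgraph) (hH : H.verts.Nonempty)
    (hmin : ∀ U ⊂ H.verts, U.Nonempty → (eIn G U : ℤ) ≤ m * U.ncard - m)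
    (hcard : H.edgeSet.ncard + m = m * H.verts.ncard + 1) {e : Sym2 V} (he : e ∈ H.edgeSet) :
    IsTreeConn m (H.deleteEdges {e}).coe := by
  have : Nonempty (H.deleteEdges {e}).verts := hH.to_subtype
  have hcard' : (H.deleteEdges {e}).edgeSet.ncard + m = m * H.verts.ncard := by
    rw [edgeSet_deleteEdges, Set.ncard_sdiff_singleton_of_mem he]
    have := (Set.ncard_pos (Set.toFinite _)).mpr ⟨e, he⟩
    omega
  refine isTreeConn_of_isSparse hm ((H.deleteEdges {e}).isSparse_coe hmin ?_) ?_
  · rw [deleteEdges_verts]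
    omega
  · rwa [ncard_edgeSet_coe, Nat.card_coe_set_eq, deleteEdges_verts]

end SimpleGraph.Subgraph

theorem stmt6_general {V : Type*} [Fintype V] (m : ℕ) (hm : 0 < m) (G : SimpleGraph V)
    (hE : m * (Fintype.card V - 1) + 1 ≤ G.edgeSet.ncard) :
    ∃ H : G.Subgraph, 2 ≤ H.verts.ncard ∧ IsTreeConn m H.coe ∧
      ∀ e ∈ H.edgeSet, IsTreeConn m (H.deleteEdges {e}).coe := by
  obtain ⟨S, hS, hdense, hmin⟩ :=
    exists_minimal_of_not_isSparse (not_isSparse_of_le_ncard_edgeSet hE)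
  have hS2 := two_le_ncard_of_lt_eIn hS hdense
  have hmS : m ≤ m * S.ncard := Nat.le_mul_of_pos_right m (by omega)
  obtain ⟨H, rfl, hH⟩ := Subgraph.exists_verts_eq_ncard_edgeSet_eq (G := G) S
    (N := m * S.ncard - m + 1) (by omega)
  have hdel : ∀ e ∈ H.edgeSet, IsTreeConn m (H.deleteEdges {e}).coe :=
    fun e he => H.isTreeConn_coe_deleteEdges hm hS hmin (by omega) he
  obtain ⟨e, he⟩ := Set.nonempty_of_ncard_ne_zero (s := H.edgeSet) (by omega)
  exact ⟨H, hS2, (hdel e he).mono fun _ _ h => h.1, hdel⟩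

theorem stmt6 {V : Type*} [Fintype V] (m : ℕ) (hm : 0 < m) (G : SimpleGraph V)
    (hV : 2 ≤ Fintype.card V)
    (hE : m * (Fintype.card V - 1) + 1 ≤ G.edgeSet.ncard) :
    ∃ H : G.Subgraph, 2 ≤ H.verts.ncard ∧ IsTreeConn m H.coe ∧
      ∀ e ∈ H.edgeSet, IsTreeConn m (H.deleteEdges {e}).coe :=
  stmt6_general m hm G hE
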